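/- Let L : ℝⁿ → ℝ be a non-negative convex function with L(0) = 0 and L(x) > 0 for x ≠ 0. Then L satisfies the two-sided Δ₂-condition if and only if sup_{x ≠ 0} L′(x, x)/L(x) < ∞, where L′(x, θ) denotes the directional derivative of L at x in direction θ. Equivalently, L satisfies the two-sided Δ₂-condition if and only if sup_{x ≠ 0} sup_{y ∈ ∂L(x)} ⟨x, y⟩/L(x) < ∞. -/

import Mathlib

/-!
Both conditions bound the radial slope of `L` by a multiple of `L`. Necessity: by convexity,
`L′(x, x)` and `⟨x, y⟩` for `y ∈ ∂L(x)` are at most `L(2x) − L(x)`. Sufficiency: the left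
difference quotient at `x` is at most `L′(x, x)`, and the subgradient inequality bounds it by
`⟨x, y⟩` (`∂L(x)` is nonempty by Hahn–Banach applied to the sublinear map `L′(x, ·)`), so either
bound gives `L(x) − L(sx) ≤ (1 − s) M L(x)`. For `s` close to `1` this reads `L(x) ≤ 2 L(sx)`;
iterating until `sᵏ ≤ 1/2` yields `L(2x) ≤ 2ᵏ L(x)`, since `L(cx) ≤ L(x)` for `c ∈ [0, 1]`.
-/

/-- The subdifferential of `L` at `x`. -/
def subdiff {n : ℕ} (L : EuclideanSpace ℝ (Fin n) → ℝ) (x : EuclideanSpace ℝ (Fin n)) :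
    Set (EuclideanSpace ℝ (Fin n)) :=
  {y | ∀ z, L x + (inner ℝ y (z - x) : ℝ) ≤ L z}

/-- The directional derivative `L′(x, θ) = inf_{ε > 0} (L(x + εθ) − L(x))/ε`. -/
noncomputable def dirDeriv {n : ℕ} (L : EuclideanSpace ℝ (Fin n) → ℝ)
    (x θ : EuclideanSpace ℝ (Fin n)) : ℝ :=
  sInf ((fun ε : ℝ => (L (x + ε • θ) - L x) / ε) '' Set.Ioi 0)


open Set Filter Topology

section VectorSpace

variable {E : Type*} [AddCommGroup E] [Module ℝ E] {L : E → ℝ}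

theorem ConvexOn.map_smul_le_of_mem_Icc (hL : ConvexOn ℝ univ L) (h0 : L 0 = 0) {x : E}
    (hx : 0 ≤ L x) {c : ℝ} (hc : c ∈ Icc (0 : ℝ) 1) : L (c • x) ≤ L x := by
  have h := hL.2 (mem_univ x) (mem_univ 0) hc.1 (sub_nonneg.2 hc.2) (add_sub_cancel c 1)
  rw [smul_zero, add_zero, h0, smul_zero, add_zero, smul_eq_mul] at h
  nlinarith [hc.2]

theorem le_pow_mul_map_pow_smul {s K : ℝ} (hK : 0 ≤ K) (h : ∀ z, L z ≤ K * L (s • z)) (k : ℕ)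
    (z : E) : L z ≤ K ^ k * L (s ^ k • z) := by
  induction k with
  | zero => simp
  | succ k ih =>
    calc L z ≤ K ^ k * L (s ^ k • z) := ih
      _ ≤ K ^ k * (K * L (s • s ^ k • z)) := by gcongr; exact h _
      _ = K ^ (k + 1) * L (s ^ (k + 1) • z) := by
        rw [smul_smul, ← pow_succ', ← mul_assoc, ← pow_succ]

theorem ConvexOn.exists_map_two_smul_le_of_sub_map_smul_le (hL : ConvexOn ℝ univ L)
    (h0 : L 0 = 0) (hnonneg : ∀ x, 0 ≤ L x) {M : ℝ}
    (h : ∀ s : ℝ, s < 1 → ∀ z, z ≠ 0 → L z - L (s • z) ≤ (1 - s) * M * L z) :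
    ∃ C : ℝ, ∀ x, L ((2 : ℝ) • x) ≤ C * L x := by
  set s : ℝ := 1 - 1 / (2 * (|M| + 1))
  have hs0 : 0 ≤ s :=
    sub_nonneg.2 (div_le_one_of_le₀ (by linarith [abs_nonneg M]) (by positivity))
  have hs1 : s < 1 := by linarith [show 0 < 1 / (2 * (|M| + 1)) by positivity]
  have hstep : ∀ z, L z ≤ 2 * L (s • z) := by
    intro z
    rcases eq_or_ne z 0 with rfl | hz
    · simp [h0]
    have hsM : (1 - s) * M ≤ 1 / 2 := by
      simp only [s, sub_sub_cancel]
      rw [div_mul_eq_mul_div, one_mul, div_le_iff₀ (by positivity)]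
      linarith [le_abs_self M]
    nlinarith [h s hs1 z hz, hnonneg z]
  obtain ⟨k, hk⟩ := exists_pow_lt_of_lt_one one_half_pos hs1
  refine ⟨2 ^ k, fun x => ?_⟩
  calc L ((2 : ℝ) • x) ≤ 2 ^ k * L (s ^ k • (2 : ℝ) • x) :=
        le_pow_mul_map_pow_smul zero_le_two hstep k _
    _ = 2 ^ k * L ((2 * s ^ k) • x) := by rw [smul_smul, mul_comm (s ^ k)]
    _ ≤ 2 ^ k * L x := by
        gcongr
        exact hL.map_smul_le_of_mem_Icc h0 (hnonneg x)
          ⟨mul_nonneg zero_le_two (pow_nonneg hs0 k), by linarith⟩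

theorem ConvexOn.map_add_smul (hL : ConvexOn ℝ univ L) (x θ : E) :
    ConvexOn ℝ univ fun t : ℝ => L (x + t • θ) := by
  simpa [Function.comp_def] using
    (hL.translate_right x).comp_linearMap (LinearMap.toSpanSingleton ℝ E θ)

theorem ConvexOn.sub_map_sub_smul_div_le (hL : ConvexOn ℝ univ L) (x θ : E) {a b : ℝ}
    (ha : 0 < a) (hb : 0 < b) : (L x - L (x - a • θ)) / a ≤ (L (x + b • θ) - L x) / b := by
  simpa [sub_eq_add_neg, ← neg_smul] using
    (hL.map_add_smul x θ).slope_mono_adjacent (mem_univ (-a)) (mem_univ b) (neg_lt_zero.2 ha) hb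

end VectorSpace

section DirDeriv

variable {n : ℕ} {L : EuclideanSpace ℝ (Fin n) → ℝ}

theorem ConvexOn.sub_map_sub_smul_div_le_dirDeriv (hL : ConvexOn ℝ univ L)
    (x θ : EuclideanSpace ℝ (Fin n)) {a : ℝ} (ha : 0 < a) :
    (L x - L (x - a • θ)) / a ≤ dirDeriv L x θ :=
  le_csInf (nonempty_Ioi.image _)
    (forall_mem_image.2 fun _ hb => hL.sub_map_sub_smul_div_le x θ ha hb)

theorem ConvexOn.dirDeriv_le_slope (hL : ConvexOn ℝ univ L) (x θ : EuclideanSpace ℝ (Fin n))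
    {t : ℝ} (ht : 0 < t) : dirDeriv L x θ ≤ (L (x + t • θ) - L x) / t :=
  csInf_le ⟨_, forall_mem_image.2 fun _ hb => hL.sub_map_sub_smul_div_le x θ one_pos hb⟩
    (mem_image_of_mem _ ht)

theorem ConvexOn.dirDeriv_le_sub (hL : ConvexOn ℝ univ L) (x z : EuclideanSpace ℝ (Fin n)) :
    dirDeriv L x (z - x) ≤ L z - L x := by
  simpa using hL.dirDeriv_le_slope x (z - x) one_pos

theorem ConvexOn.tendsto_slope_dirDeriv (hL : ConvexOn ℝ univ L) (x θ : EuclideanSpace ℝ (Fin n)) :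
    Tendsto (fun t : ℝ => (L (x + t • θ) - L x) / t) (𝓝[>] 0) (𝓝 (dirDeriv L x θ)) := by
  have h := (hL.map_add_smul x θ).hasDerivWithinAt_sInf_slope_of_mem_interior
    (by simp : (0 : ℝ) ∈ interior univ)
  have hslope : slope (fun t : ℝ => L (x + t • θ)) 0 = fun t => (L (x + t • θ) - L x) / t := by
    ext t
    simp [slope_def_field]
  have h' := (hasDerivWithinAt_iff_tendsto_slope' self_notMem_Ioi).1 h
  simp only [hslope, mem_univ, true_and] at h'
  exact h'

theorem ConvexOn.dirDeriv_smul (hL : ConvexOn ℝ univ L) (x θ : EuclideanSpace ℝ (Fin n)) {c : ℝ}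
    (hc : 0 < c) : dirDeriv L x (c • θ) = c * dirDeriv L x θ := by
  have hmul : Tendsto (fun t : ℝ => c * t) (𝓝[>] 0) (𝓝[>] 0) := by
    refine tendsto_nhdsWithin_iff.2 ⟨?_, eventually_mem_nhdsWithin.mono fun t ht => mul_pos hc ht⟩
    simpa using ((continuous_const_mul c).tendsto 0).mono_left nhdsWithin_le_nhds
  refine tendsto_nhds_unique (hL.tendsto_slope_dirDeriv x (c • θ)) ?_
  refine (((hL.tendsto_slope_dirDeriv x θ).comp hmul).const_mul c).congr' ?_
  filter_upwards [self_mem_nhdsWithin] with t ht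
  simp only [Function.comp_apply, smul_smul]
  field_simp [(mem_Ioi.1 ht).ne', hc.ne']

theorem ConvexOn.dirDeriv_add_le (hL : ConvexOn ℝ univ L) (x θ₁ θ₂ : EuclideanSpace ℝ (Fin n)) :
    dirDeriv L x (θ₁ + θ₂) ≤ dirDeriv L x θ₁ + dirDeriv L x θ₂ := by
  have hmid : ∀ t : ℝ, 0 < t → (L (x + t • (θ₁ + θ₂)) - L x) / t ≤
      (L (x + t • (2 : ℝ) • θ₁) - L x) / t / 2 + (L (x + t • (2 : ℝ) • θ₂) - L x) / t / 2 := by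
    intro t ht
    have h := hL.2 (mem_univ (x + t • (2 : ℝ) • θ₁)) (mem_univ (x + t • (2 : ℝ) • θ₂))
      (by norm_num : (0 : ℝ) ≤ 1 / 2) (by norm_num : (0 : ℝ) ≤ 1 / 2) (by norm_num)
    have hpt : (1 / 2 : ℝ) • (x + t • (2 : ℝ) • θ₁) + (1 / 2 : ℝ) • (x + t • (2 : ℝ) • θ₂) =
        x + t • (θ₁ + θ₂) := by module
    rw [hpt, smul_eq_mul, smul_eq_mul] at h
    rw [div_div, div_div, ← add_div, div_le_div_iff₀ ht (by positivity)]
    nlinarith [mul_le_mul_of_nonneg_left h ht.le]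
  have h := le_of_tendsto_of_tendsto (hL.tendsto_slope_dirDeriv x (θ₁ + θ₂))
    (((hL.tendsto_slope_dirDeriv x ((2 : ℝ) • θ₁)).div_const 2).add
      ((hL.tendsto_slope_dirDeriv x ((2 : ℝ) • θ₂)).div_const 2))
    (eventually_mem_nhdsWithin.mono hmid)
  rw [hL.dirDeriv_smul x θ₁ two_pos, hL.dirDeriv_smul x θ₂ two_pos] at h
  linarith

theorem ConvexOn.subdiff_nonempty (hL : ConvexOn ℝ univ L) (x : EuclideanSpace ℝ (Fin n)) :
    (subdiff L x).Nonempty := by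
  have hzero : dirDeriv L x 0 = 0 := by
    have h := hL.dirDeriv_smul x 0 two_pos
    rw [smul_zero] at h
    linarith
  obtain ⟨g, -, hg⟩ := exists_extension_of_le_sublinear ⟨⊥, 0⟩ (dirDeriv L x)
    (fun c hc θ => hL.dirDeriv_smul x θ hc) (hL.dirDeriv_add_le x) (by
      rintro ⟨z, hz⟩
      rw [Submodule.mem_bot] at hz
      subst hz
      simp [hzero])
  refine ⟨(InnerProductSpace.toDual ℝ _).symm (LinearMap.toContinuousLinearMap g), fun z => ?_⟩
  rw [InnerProductSpace.toDual_symm_apply, LinearMap.coe_toContinuousLinearMap']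
  linarith [hg (z - x), hL.dirDeriv_le_sub x z]

end DirDeriv

section Delta2

variable {n : ℕ} {L : EuclideanSpace ℝ (Fin n) → ℝ} {x y : EuclideanSpace ℝ (Fin n)} {C M s : ℝ}

theorem ConvexOn.dirDeriv_self_le_of_map_two_smul_le (hL : ConvexOn ℝ univ L)
    (hC : L ((2 : ℝ) • x) ≤ C * L x) : dirDeriv L x x ≤ (C - 1) * L x := by
  have h := hL.dirDeriv_le_slope x x one_pos
  rw [one_smul, div_one, ← two_smul ℝ x] at h
  linarith

theorem inner_le_of_mem_subdiff_of_map_two_smul_le (hy : y ∈ subdiff L x)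
    (hC : L ((2 : ℝ) • x) ≤ C * L x) : inner ℝ x y ≤ (C - 1) * L x := by
  have h := hy ((2 : ℝ) • x)
  rw [two_smul, add_sub_cancel_right, real_inner_comm] at h
  rw [two_smul] at hC
  linarith

theorem ConvexOn.sub_map_smul_le_of_dirDeriv_self_le (hL : ConvexOn ℝ univ L)
    (hM : dirDeriv L x x ≤ M * L x) (hs : s < 1) : L x - L (s • x) ≤ (1 - s) * M * L x := by
  have h := hL.sub_map_sub_smul_div_le_dirDeriv x x (sub_pos.2 hs)
  rw [sub_smul, one_smul, sub_sub_cancel, div_le_iff₀' (sub_pos.2 hs)] at h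
  nlinarith [mul_le_mul_of_nonneg_left hM (sub_pos.2 hs).le]

theorem sub_map_smul_le_of_mem_subdiff_of_inner_le (hy : y ∈ subdiff L x)
    (hM : inner ℝ x y ≤ M * L x) (hs : s ≤ 1) : L x - L (s • x) ≤ (1 - s) * M * L x := by
  have h := hy (s • x)
  rw [show s • x - x = -((1 - s) • x) by module, inner_neg_right, inner_smul_right,
    real_inner_comm] at h
  nlinarith [mul_le_mul_of_nonneg_left hM (sub_nonneg.2 hs)]

end Delta2

theorem stmt10 {n : ℕ} (L : EuclideanSpace ℝ (Fin n) → ℝ) (hconv : ConvexOn ℝ Set.univ L)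
    (hnonneg : ∀ x, 0 ≤ L x) (h0 : L 0 = 0) (hpos : ∀ x, x ≠ 0 → 0 < L x) :
    ((∃ C : ℝ, ∀ x : EuclideanSpace ℝ (Fin n), L ((2 : ℝ) • x) ≤ C * L x) ↔
      (∃ M : ℝ, ∀ x : EuclideanSpace ℝ (Fin n), x ≠ 0 → dirDeriv L x x / L x ≤ M)) ∧
    ((∃ C : ℝ, ∀ x : EuclideanSpace ℝ (Fin n), L ((2 : ℝ) • x) ≤ C * L x) ↔
      (∃ M : ℝ, ∀ x : EuclideanSpace ℝ (Fin n), x ≠ 0 →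
        ∀ y ∈ subdiff L x, (inner ℝ x y : ℝ) / L x ≤ M)) := by
  have hdiv : ∀ x, x ≠ 0 → ∀ a M : ℝ, a / L x ≤ M ↔ a ≤ M * L x :=
    fun x hx _ _ => div_le_iff₀ (hpos x hx)
  refine ⟨⟨?_, ?_⟩, ⟨?_, ?_⟩⟩
  · rintro ⟨C, hC⟩
    exact ⟨C - 1, fun x hx => (hdiv x hx _ _).2 (hconv.dirDeriv_self_le_of_map_two_smul_le (hC x))⟩
  · rintro ⟨M, hM⟩
    exact hconv.exists_map_two_smul_le_of_sub_map_smul_le h0 hnonneg fun s hs z hz =>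
      hconv.sub_map_smul_le_of_dirDeriv_self_le ((hdiv z hz _ _).1 (hM z hz)) hs
  · rintro ⟨C, hC⟩
    exact ⟨C - 1, fun x hx y hy =>
      (hdiv x hx _ _).2 (inner_le_of_mem_subdiff_of_map_two_smul_le hy (hC x))⟩
  · rintro ⟨M, hM⟩
    refine hconv.exists_map_two_smul_le_of_sub_map_smul_le h0 hnonneg (M := M) fun s hs z hz => ?_
    obtain ⟨y, hy⟩ := hconv.subdiff_nonempty z
    exact sub_map_smul_le_of_mem_subdiff_of_inner_le hy ((hdiv z hz _ _).1 (hM z hz y hy)) hs.le
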